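/- arXiv:2312.00247 — 2 statements merged into one kernel-verified Lean document; each statement's English description precedes it below -/
import Mathlib

section
/- If j ≤ k ≤ k+1 ≤ n and x ∈ (j/(n-1), (j+1)/(n-1)), then 1 ≥ m_{k,n,j}(x) ≥ m_{k+1,n,j}(x); and if 0 ≤ k ≤ k+1 ≤ j then m_{k,n,j}(x) ≤ m_{k+1,n,j}(x) ≤ 1, where m_{k,n,j}(x) = b_{n,k}(x)/b_{n,j}(x) with b_{n,k}(x) = C(n+k-1,k) x^k (1+x)^{-(n+k)}. -/
open Finset Set

/-- Basis functions of the truncated Baskakov operator on `[0,1]`: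
`b_{n,k}(x) = C(n+k-1,k) x^k (1+x)^{-(n+k)}`. -/
noncomputable def bk (n k : ℕ) (x : ℝ) : ℝ :=
  (Nat.choose (n + k - 1) k : ℝ) * x ^ k / (1 + x) ^ (n + k)

/-- Max-product truncated Baskakov operator on `[0,1]`. -/
noncomputable def UM (n : ℕ) (f : ℝ → ℝ) (x : ℝ) : ℝ :=
  ((range (n + 1)).sup' nonempty_range_add_one fun k => bk n k x * f ((k : ℝ) / n)) /
  ((range (n + 1)).sup' nonempty_range_add_one fun k => bk n k x)

/-- Basis functions on a general compact interval `[a,b]`. -/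
noncomputable def bkab (a b : ℝ) (n k : ℕ) (x : ℝ) : ℝ :=
  (Nat.choose (n + k - 1) k : ℝ) * ((x - a) / (b - a)) ^ k /
    ((b - 2 * a + x) / (b - a)) ^ (n + k)

/-- Max-product truncated Baskakov operator on `[a,b]`. -/
noncomputable def UMab (a b : ℝ) (n : ℕ) (f : ℝ → ℝ) (x : ℝ) : ℝ :=
  ((range (n + 1)).sup' nonempty_range_add_one fun k =>
      bkab a b n k x * f (a + (b - a) * k / n)) /
  ((range (n + 1)).sup' nonempty_range_add_one fun k => bkab a b n k x)

/-- Modulus of continuity `ω₁(f;δ)` of `f` on a set `s`. -/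
noncomputable def omega1 (f : ℝ → ℝ) (s : Set ℝ) (δ : ℝ) : ℝ :=
  sSup {d | ∃ x ∈ s, ∃ y ∈ s, |x - y| ≤ δ ∧ d = |f x - f y|}

/-! The ratio of consecutive basis functions is
`b_{n,k+1}(x) / b_{n,k}(x) = (n + k) x / ((k + 1) (1 + x))`, which is at most `1` exactly when
`x (n - 1) ≤ k + 1`. Hence, when `j ≤ x (n - 1) ≤ j + 1`, the sequence `k ↦ b_{n,k}(x)` increases
up to `k = j` and decreases afterwards, so `b_{n,j}(x)` is its maximum. -/

lemma bk_pos {n : ℕ} (hn : n ≠ 0) (k : ℕ) {x : ℝ} (hx : 0 < x) : 0 < bk n k x := by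
  have : 0 < ((n + k - 1).choose k : ℝ) := by exact_mod_cast Nat.choose_pos (by omega)
  unfold bk
  positivity

lemma bk_succ_mul {n : ℕ} (hn : n ≠ 0) (k : ℕ) {x : ℝ} (hx : 1 + x ≠ 0) :
    bk n (k + 1) x * ((k + 1) * (1 + x)) = bk n k x * ((n + k) * x) := by
  have hchoose : ((n + k).choose (k + 1) : ℝ) * (k + 1) = (n + k) * (n + k - 1).choose k := by
    have := Nat.add_one_mul_choose_eq (n + k - 1) k
    rw [show n + k - 1 + 1 = n + k by omega] at this
    exact_mod_cast this.symm
  unfold bk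
  rw [show n + (k + 1) - 1 = n + k by omega, pow_succ x, show n + (k + 1) = n + k + 1 by omega,
    pow_succ (1 + x)]
  field_simp
  linear_combination x ^ (k + 1) * hchoose

lemma bk_succ_le_iff {n : ℕ} (hn : n ≠ 0) {k : ℕ} {x : ℝ} (hx : 0 < x) :
    bk n (k + 1) x ≤ bk n k x ↔ x * (n - 1) ≤ k + 1 := by
  rw [← mul_le_mul_iff_of_pos_right (by positivity : (0 : ℝ) < (k + 1) * (1 + x)),
    bk_succ_mul hn k (by positivity), mul_le_mul_iff_of_pos_left (bk_pos hn k hx)]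
  constructor <;> intro h <;> linarith

lemma bk_le_succ_iff {n : ℕ} (hn : n ≠ 0) {k : ℕ} {x : ℝ} (hx : 0 < x) :
    bk n k x ≤ bk n (k + 1) x ↔ k + 1 ≤ x * (n - 1) := by
  rw [← mul_le_mul_iff_of_pos_right (by positivity : (0 : ℝ) < (k + 1) * (1 + x)),
    bk_succ_mul hn k (by positivity), mul_le_mul_iff_of_pos_left (bk_pos hn k hx)]
  constructor <;> intro h <;> linarith

lemma bk_monotoneOn_Iic {n j : ℕ} (hn : n ≠ 0) {x : ℝ} (hx : 0 < x) (hj : j ≤ x * (n - 1)) :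
    MonotoneOn (fun k ↦ bk n k x) (Set.Iic j) := by
  refine monotoneOn_of_le_succ ordConnected_Iic fun k _ _ hk ↦ ?_
  simp only [Order.succ_eq_add_one, Set.mem_Iic] at hk ⊢
  refine (bk_le_succ_iff hn hx).2 (le_trans ?_ hj)
  exact_mod_cast hk

lemma bk_antitoneOn_Ici {n j : ℕ} (hn : n ≠ 0) {x : ℝ} (hx : 0 < x) (hj : x * (n - 1) ≤ j + 1) :
    AntitoneOn (fun k ↦ bk n k x) (Set.Ici j) := by
  refine antitoneOn_nat_Ici_of_succ_le fun k hk ↦ (bk_succ_le_iff hn hx).2 (hj.trans ?_)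
  exact_mod_cast Nat.succ_le_succ hk

lemma bk_isMaxOn {n j : ℕ} (hn : n ≠ 0) {x : ℝ} (hx : 0 < x) (hj : j ≤ x * (n - 1))
    (hj' : x * (n - 1) ≤ j + 1) : IsMaxOn (fun k ↦ bk n k x) univ j :=
  isMaxOn_univ_of_mono_anti (bk_monotoneOn_Iic hn hx hj) (bk_antitoneOn_Ici hn hx hj')

theorem m_knj_monotonicity_general (n : ℕ) (hn : 2 ≤ n) (j : ℕ)
    (x : ℝ) (hx : x ∈ Set.Ioo ((j : ℝ) / ((n : ℝ) - 1)) (((j : ℝ) + 1) / ((n : ℝ) - 1)))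
    (k : ℕ) :
    (j ≤ k → k + 1 ≤ n →
      bk n k x / bk n j x ≤ 1 ∧ bk n (k + 1) x / bk n j x ≤ bk n k x / bk n j x) ∧
    (k + 1 ≤ j →
      bk n k x / bk n j x ≤ bk n (k + 1) x / bk n j x ∧ bk n (k + 1) x / bk n j x ≤ 1) := by
  have hn0 : n ≠ 0 := by omega
  have hn1 : (0 : ℝ) < n - 1 := by
    rw [sub_pos, Nat.one_lt_cast]
    omega
  obtain ⟨hjx, hxj⟩ := hx
  rw [div_lt_iff₀ hn1] at hjx
  rw [lt_div_iff₀ hn1] at hxj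
  have hx0 : 0 < x := pos_of_mul_pos_left ((Nat.cast_nonneg j).trans_lt hjx) hn1.le
  have hbj := bk_pos hn0 j hx0
  have hmax : ∀ i, bk n i x / bk n j x ≤ 1 := fun i ↦
    (div_le_one hbj).2 (bk_isMaxOn hn0 hx0 hjx.le hxj.le trivial)
  refine ⟨fun hjk _ ↦ ⟨hmax k, ?_⟩, fun hkj ↦ ⟨?_, hmax (k + 1)⟩⟩
  · refine div_le_div_of_nonneg_right ((bk_succ_le_iff hn0 hx0).2 (hxj.le.trans ?_)) hbj.le
    exact_mod_cast Nat.succ_le_succ hjk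
  · refine div_le_div_of_nonneg_right ((bk_le_succ_iff hn0 hx0).2 (le_trans ?_ hjx.le)) hbj.le
    exact_mod_cast hkj

theorem m_knj_monotonicity (n : ℕ) (hn : 2 ≤ n) (j : ℕ) (hj : j ≤ n - 2)
    (x : ℝ) (hx : x ∈ Set.Ioo ((j : ℝ) / ((n : ℝ) - 1)) (((j : ℝ) + 1) / ((n : ℝ) - 1)))
    (k : ℕ) :
    (j ≤ k → k + 1 ≤ n →
      bk n k x / bk n j x ≤ 1 ∧ bk n (k + 1) x / bk n j x ≤ bk n k x / bk n j x) ∧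
    (k + 1 ≤ j →
      bk n k x / bk n j x ≤ bk n (k + 1) x / bk n j x ∧ bk n (k + 1) x / bk n j x ≤ 1) :=
  m_knj_monotonicity_general n hn j x hx k
end

section
/- If f : [a,b] → ℝ₊ is continuous and quasi-concave, then U_n^{(M)}(f;[a,b]) is quasi-concave on [a,b] for every n ≥ 2. -/
open Finset Set

/-!
Write the operator as `T(x) = max_k b_k(x) v_k / max_k b_k(x)`. The Baskakov weights are totally
positive of order two: for `j ≤ k` the ratio `b_k / b_j` is nondecreasing. Fix `z` and an index `j`
at which `b_j(z)` is maximal. Quasi-concavity of the node values `v_k` makes `v_j` dominate all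
values on one side of `j`, say on the left. Then for `x ≤ z` every term of `T(x)` is at most `T(z)`:
a term with `k ≤ j` is at most `v_k ≤ v_j`, a term with `k ≥ j` is controlled by the growth of
`b_k / b_j`. Hence `T(x) ≤ T(z)`, and symmetrically `T(y) ≤ T(z)` for `y ≥ z` in the other case.
-/

theorem quasiconcaveOn_iff_min_le_of_mem_Icc {𝕜 β : Type*} [Field 𝕜] [LinearOrder 𝕜]
    [IsStrictOrderedRing 𝕜] [LinearOrder β] {s : Set 𝕜} {f : 𝕜 → β} :
    QuasiconcaveOn 𝕜 s f ↔
      s.OrdConnected ∧ ∀ x ∈ s, ∀ y ∈ s, ∀ z ∈ Icc x y, min (f x) (f y) ≤ f z := by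
  refine ⟨fun hf => ⟨hf.convex.ordConnected, fun x hx y hy z hz => ?_⟩, fun ⟨hs, h⟩ r => ?_⟩
  · have hlevel := (convex_iff_ordConnected.1 (hf (min (f x) (f y)))).out
    exact (hlevel ⟨hx, min_le_left _ _⟩ ⟨hy, min_le_right _ _⟩ hz).2
  · refine convex_iff_ordConnected.2 ⟨fun x hx y hy z hz => ⟨hs.out hx.1 hy.1 hz, ?_⟩⟩
    exact (le_min hx.2 hy.2).trans (h x hx.1 y hy.1 z hz)

theorem forall_le_apply_le_or_forall_ge_apply_le {ι β : Type*} [Preorder ι] [LinearOrder β]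
    {s : Set ι} {v : ι → β}
    (hv : ∀ i ∈ s, ∀ j ∈ s, ∀ k ∈ s, i ≤ j → j ≤ k → min (v i) (v k) ≤ v j) {j : ι} (hj : j ∈ s) :
    (∀ k ∈ s, k ≤ j → v k ≤ v j) ∨ ∀ k ∈ s, j ≤ k → v k ≤ v j := by
  by_contra! h
  obtain ⟨⟨i, hi, hij, hvi⟩, ⟨k, hk, hjk, hvk⟩⟩ := h
  exact (hv i hi j hj k hk hij hjk).not_gt (lt_min hvi hvk)

theorem pow_mul_pow_le_pow_mul_pow {R : Type*} [CommSemiring R] [PartialOrder R]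
    [IsOrderedRing R] {p q : R} (hp : 0 ≤ p) (hpq : p ≤ q) {j k : ℕ} (hjk : j ≤ k) :
    p ^ k * q ^ j ≤ q ^ k * p ^ j := by
  obtain ⟨d, rfl⟩ := Nat.exists_eq_add_of_le hjk
  calc p ^ (j + d) * q ^ j = (p * q) ^ j * p ^ d := by ring
    _ ≤ (p * q) ^ j * q ^ d :=
      mul_le_mul_of_nonneg_left (pow_le_pow_left₀ hp hpq d)
        (pow_nonneg (mul_nonneg hp (hp.trans hpq)) j)
    _ = q ^ (j + d) * p ^ j := by ring

section MaxProduct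

variable {ι α : Type*} (s : Finset ι) (hs : s.Nonempty)

noncomputable def maxProduct (w : ι → α → ℝ) (v : ι → ℝ) (x : α) : ℝ :=
  (s.sup' hs fun k => w k x * v k) / s.sup' hs fun k => w k x

variable {s hs}

theorem maxProduct_le_maxProduct {w : ι → α → ℝ} {v : ι → ℝ} {x y : α} {j : ι} (hj : j ∈ s)
    (hjmax : ∀ k ∈ s, w k y ≤ w j y) (hwj : 0 < w j y) (hw : ∀ k ∈ s, 0 ≤ w k y)
    (hDx : 0 < s.sup' hs fun k => w k x) (hv : ∀ k ∈ s, 0 ≤ v k)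
    (hk : ∀ k ∈ s, v k ≤ v j ∨ w k x * w j y ≤ w k y * w j x) :
    maxProduct s hs w v x ≤ maxProduct s hs w v y := by
  set Dx := s.sup' hs fun k => w k x
  set Ny := s.sup' hs fun k => w k y * v k
  have hDy : (s.sup' hs fun k => w k y) = w j y :=
    le_antisymm (sup'_le _ _ hjmax) (le_sup' (fun k => w k y) hj)
  have hTy : maxProduct s hs w v y = Ny / w j y := by rw [maxProduct, hDy]
  have hvj : v j ≤ Ny / w j y := by
    rw [le_div_iff₀ hwj, mul_comm]
    exact le_sup' (fun k => w k y * v k) hj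
  rw [hTy, maxProduct, div_le_iff₀ hDx]
  refine sup'_le _ _ fun k hks => ?_
  rcases hk k hks with hvk | hcross
  · calc w k x * v k ≤ Dx * v k :=
          mul_le_mul_of_nonneg_right (le_sup' (fun k => w k x) hks) (hv k hks)
      _ ≤ Dx * (Ny / w j y) := mul_le_mul_of_nonneg_left (hvk.trans hvj) hDx.le
      _ = Ny / w j y * Dx := mul_comm _ _
  · have hterm : w k x * v k ≤ w k y * v k / w j y * Dx := by
      rw [div_mul_eq_mul_div, le_div_iff₀ hwj]
      calc w k x * v k * w j y = (w k x * w j y) * v k := by ring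
        _ ≤ (w k y * w j x) * v k := mul_le_mul_of_nonneg_right hcross (hv k hks)
        _ ≤ (w k y * Dx) * v k := mul_le_mul_of_nonneg_right
          (mul_le_mul_of_nonneg_left (le_sup' (fun k => w k x) hj) (hw k hks)) (hv k hks)
        _ = w k y * v k * Dx := by ring
    exact hterm.trans (mul_le_mul_of_nonneg_right
      (div_le_div_of_nonneg_right (le_sup' (fun k => w k y * v k) hks) hwj.le) hDx.le)

variable [LinearOrder ι]

theorem quasiconcaveOn_maxProduct {S : Set ℝ} (hS : S.OrdConnected) {w : ι → ℝ → ℝ}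
    {v : ι → ℝ} (hw : ∀ k ∈ s, ∀ x ∈ S, 0 ≤ w k x) (hD : ∀ x ∈ S, 0 < s.sup' hs fun k => w k x)
    (hcross : ∀ j ∈ s, ∀ k ∈ s, j ≤ k → ∀ x ∈ S, ∀ y ∈ S, x ≤ y →
      w k x * w j y ≤ w k y * w j x)
    (hv : ∀ k ∈ s, 0 ≤ v k)
    (hvqc : ∀ i ∈ s, ∀ j ∈ s, ∀ k ∈ s, i ≤ j → j ≤ k → min (v i) (v k) ≤ v j) :
    QuasiconcaveOn ℝ S (maxProduct s hs w v) := by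
  refine quasiconcaveOn_iff_min_le_of_mem_Icc.2 ⟨hS, fun x hx y hy z hz => ?_⟩
  have hzS : z ∈ S := hS.out hx hy hz
  obtain ⟨j, hj, hjmax⟩ := s.exists_max_image (fun k => w k z) hs
  have hwj : 0 < w j z := (hD z hzS).trans_le (sup'_le _ _ hjmax)
  rcases forall_le_apply_le_or_forall_ge_apply_le (s := (s : Set ι)) hvqc hj with hleft | hright
  · refine (min_le_left _ _).trans (maxProduct_le_maxProduct hj hjmax hwj (hw · · z hzS)
      (hD x hx) hv fun k hk => ?_)
    rcases le_total k j with hkj | hjk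
    · exact .inl (hleft k hk hkj)
    · exact .inr (hcross j hj k hk hjk x hx z hzS hz.1)
  · refine (min_le_right _ _).trans (maxProduct_le_maxProduct hj hjmax hwj (hw · · z hzS)
      (hD y hy) hv fun k hk => ?_)
    rcases le_total j k with hjk | hkj
    · exact .inl (hright k hk hjk)
    · exact .inr (by linarith [hcross k hk j hj hkj z hzS y hy hz.2])

end MaxProduct

theorem bk_eq_mul_div {x : ℝ} (hx : 1 + x ≠ 0) (n k : ℕ) :
    bk n k x = (Nat.choose (n + k - 1) k : ℝ) * (x / (1 + x)) ^ k / (1 + x) ^ n := by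
  rw [bk, div_pow, pow_add]
  field_simp

theorem bk_nonneg (n k : ℕ) {x : ℝ} (hx : 0 ≤ x) : 0 ≤ bk n k x := by
  unfold bk
  positivity

theorem bk_zero_pos (n : ℕ) {x : ℝ} (hx : 0 < 1 + x) : 0 < bk n 0 x := by
  simp only [bk, Nat.choose_zero_right, Nat.cast_one, pow_zero, mul_one, add_zero]
  positivity

theorem bk_mul_bk_le (n : ℕ) {j k : ℕ} (hjk : j ≤ k) {x y : ℝ} (hx : 0 ≤ x) (hxy : x ≤ y) :
    bk n k x * bk n j y ≤ bk n k y * bk n j x := by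
  have hx1 : 0 < 1 + x := by linarith
  have hy1 : 0 < 1 + y := by linarith
  have hr : x / (1 + x) ≤ y / (1 + y) := by
    rw [div_le_div_iff₀ hx1 hy1]
    linarith
  have hpow := pow_mul_pow_le_pow_mul_pow (by positivity) hr hjk
  rw [bk_eq_mul_div hx1.ne', bk_eq_mul_div hx1.ne', bk_eq_mul_div hy1.ne',
    bk_eq_mul_div hy1.ne']
  set c := (Nat.choose (n + k - 1) k : ℝ) * Nat.choose (n + j - 1) j / ((1 + x) ^ n * (1 + y) ^ n)
  calc _ = c * ((x / (1 + x)) ^ k * (y / (1 + y)) ^ j) := by ring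
    _ ≤ c * ((y / (1 + y)) ^ k * (x / (1 + x)) ^ j) :=
      mul_le_mul_of_nonneg_left hpow (by positivity)
    _ = _ := by ring

theorem bkab_eq_bk {a b : ℝ} (hab : a ≠ b) (n k : ℕ) (x : ℝ) :
    bkab a b n k x = bk n k ((x - a) / (b - a)) := by
  have hba : b - a ≠ 0 := sub_ne_zero.2 hab.symm
  have h : (b - 2 * a + x) / (b - a) = 1 + (x - a) / (b - a) := by
    field_simp
    ring
  rw [bkab, bk, h]

theorem bkab_nonneg {a b : ℝ} (hab : a < b) (n k : ℕ) {x : ℝ} (hx : a ≤ x) :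
    0 ≤ bkab a b n k x := by
  rw [bkab_eq_bk hab.ne]
  exact bk_nonneg n k (div_nonneg (sub_nonneg.2 hx) (sub_nonneg.2 hab.le))

theorem bkab_zero_pos {a b : ℝ} (hab : a < b) (n : ℕ) {x : ℝ} (hx : a ≤ x) :
    0 < bkab a b n 0 x := by
  rw [bkab_eq_bk hab.ne]
  exact bk_zero_pos n (by linarith [div_nonneg (sub_nonneg.2 hx) (sub_nonneg.2 hab.le)])

theorem bkab_mul_bkab_le {a b : ℝ} (hab : a < b) (n : ℕ) {j k : ℕ} (hjk : j ≤ k) {x y : ℝ}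
    (hx : a ≤ x) (hxy : x ≤ y) :
    bkab a b n k x * bkab a b n j y ≤ bkab a b n k y * bkab a b n j x := by
  simp only [bkab_eq_bk hab.ne]
  exact bk_mul_bk_le n hjk (div_nonneg (sub_nonneg.2 hx) (sub_nonneg.2 hab.le))
    (div_le_div_of_nonneg_right (sub_le_sub_right hxy a) (sub_nonneg.2 hab.le))

theorem UMab_eq_maxProduct (a b : ℝ) (n : ℕ) (f : ℝ → ℝ) :
    UMab a b n f = maxProduct (range (n + 1)) nonempty_range_add_one (bkab a b n)
      (fun k => f (a + (b - a) * k / n)) := rfl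

theorem UMab_preserves_quasiconcavity_general (a b : ℝ) (hab : a < b) (n : ℕ)
    (f : ℝ → ℝ)
    (hfpos : ∀ x ∈ Set.Icc a b, 0 ≤ f x)
    (hqc : QuasiconcaveOn ℝ (Set.Icc a b) f) :
    QuasiconcaveOn ℝ (Set.Icc a b) (UMab a b n f) := by
  set node : ℕ → ℝ := fun k => a + (b - a) * k / n
  have hnode : ∀ k ∈ range (n + 1), node k ∈ Icc a b := fun k hk => by
    have ht0 : (0 : ℝ) ≤ k / n := by positivity
    have ht1 : (k : ℝ) / n ≤ 1 :=
      div_le_one_of_le₀ (by exact_mod_cast mem_range_succ_iff.1 hk) n.cast_nonneg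
    simp only [node, mul_div_assoc]
    constructor <;> nlinarith
  have hmono : Monotone node := fun i j hij => by
    simp only [node]
    gcongr
  rw [UMab_eq_maxProduct]
  refine quasiconcaveOn_maxProduct ordConnected_Icc (fun k _ x hx => bkab_nonneg hab n k hx.1)
    (fun x hx => (bkab_zero_pos hab n hx.1).trans_le
      (le_sup' (fun k => bkab a b n k x) (mem_range.2 n.succ_pos)))
    (fun j _ k _ hjk x hx y _ hxy => bkab_mul_bkab_le hab n hjk hx.1 hxy)
    (fun k hk => hfpos _ (hnode k hk)) fun i hi j _ k hk hij hjk => ?_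
  exact (quasiconcaveOn_iff_min_le_of_mem_Icc.1 hqc).2 _ (hnode i hi) _ (hnode k hk) _
    ⟨hmono hij, hmono hjk⟩

theorem UMab_preserves_quasiconcavity (a b : ℝ) (hab : a < b) (n : ℕ) (hn : 2 ≤ n)
    (f : ℝ → ℝ) (hf : ContinuousOn f (Set.Icc a b))
    (hfpos : ∀ x ∈ Set.Icc a b, 0 ≤ f x)
    (hqc : QuasiconcaveOn ℝ (Set.Icc a b) f) :
    QuasiconcaveOn ℝ (Set.Icc a b) (UMab a b n f) :=
  UMab_preserves_quasiconcavity_general a b hab n f hfpos hqc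
end
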